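/- Let W = {w₁, …, w_d} and V = {v₁, …, v_d} be finite sets equipped with probability weights (p_a)_{a=1}^d on W and (q_b)_{b=1}^d on V, and let f : W → ℝ^p and g : V → ℝ^p. Define the d × d real matrix M with entries M_{ab} = √(p_a·q_b)·⟨f(w_a), g(v_b)⟩. Then σ_p(M)² ≥ σ_p(Σ_{a=1}^d p_a f(w_a) f(w_a)ᵀ) · σ_p(Σ_{b=1}^d q_b g(v_b) g(v_b)ᵀ). -/

import Mathlib

open Matrix

/-- Euclidean norm of a finitely indexed real vector. -/
noncomputable def euclNorm {m : Type*} [Fintype m] (v : m → ℝ) : ℝ :=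
  Real.sqrt (∑ i, v i ^ 2)

/-- The `p`-th largest singular value of a real matrix, via the Courant–Fischer
max–min characterization.  For a positive semidefinite `p × p` matrix this is its
smallest eigenvalue. -/
noncomputable def singularValue {n m : Type*} [Fintype n] [Fintype m] (p : ℕ)
    (A : Matrix n m ℝ) : ℝ :=
  sSup {r : ℝ | 0 ≤ r ∧ ∃ V : Submodule ℝ (m → ℝ), Module.finrank ℝ V = p ∧
    ∀ x ∈ V, r * euclNorm x ≤ euclNorm (A.mulVec x)}

/-!
Let `F` and `G` be the matrices with rows `√p_a f(w_a)` and `√q_b g(v_b)`, so that the two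
weighted Gram matrices are `FᵀF` and `GᵀG` and `M = FGᵀ`. Suppose `r‖x‖ ≤ ‖FᵀFx‖` and
`s‖x‖ ≤ ‖GᵀGx‖` for all `x`, with `s > 0`. Then `G` is injective, so its range is
`p`-dimensional, and for `y = Gx`
  `‖FGᵀy‖² = ‖F(GᵀGx)‖² ≥ r‖GᵀGx‖² ≥ rs⟨x, GᵀGx⟩ = rs‖y‖²`.
The first inequality holds because every eigenvalue of the positive semidefinite `FᵀF` is at
least `r`; the second is Cauchy–Schwarz combined with `‖GᵀGx‖ ≥ s‖x‖`. Hence `rs ≤ σ_p(M)²`,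
and taking suprema over `r` and `s` gives the theorem.
-/

open scoped RealInnerProductSpace

namespace LinearMap.IsPositive

variable {E : Type*} [NormedAddCommGroup E] [InnerProductSpace ℝ E] [FiniteDimensional ℝ E]
  {T : E →ₗ[ℝ] E} {s : ℝ}

theorem le_eigenvalues_of_mul_norm_le (hT : T.IsPositive) (h : ∀ x, s * ‖x‖ ≤ ‖T x‖)
    (i : Fin (Module.finrank ℝ E)) : s ≤ hT.isSymmetric.eigenvalues rfl i := by
  have := h (hT.isSymmetric.eigenvectorBasis rfl i)
  rw [hT.isSymmetric.apply_eigenvectorBasis, norm_smul, OrthonormalBasis.norm_eq_one, mul_one,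
    mul_one, RCLike.norm_ofReal] at this
  rwa [abs_of_nonneg (hT.nonneg_eigenvalues rfl i)] at this

theorem mul_norm_sq_le_inner_of_mul_norm_le (hT : T.IsPositive) (h : ∀ x, s * ‖x‖ ≤ ‖T x‖)
    (x : E) : s * ‖x‖ ^ 2 ≤ ⟪T x, x⟫ := by
  let b := hT.isSymmetric.eigenvectorBasis rfl
  rw [← b.repr.norm_map, ← b.repr.inner_map_map, EuclideanSpace.norm_sq_eq, Finset.mul_sum,
    PiLp.inner_apply]
  refine Finset.sum_le_sum fun i _ => ?_
  have hμ := le_eigenvalues_of_mul_norm_le hT h i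
  rw [hT.isSymmetric.eigenvectorBasis_apply_self_apply, Real.norm_eq_abs, sq_abs]
  simp only [RCLike.inner_apply, conj_trivial, RCLike.ofReal_real_eq_id, id_eq]
  nlinarith [sq_nonneg (b.repr x i)]

end LinearMap.IsPositive

theorem mul_inner_le_norm_sq_of_mul_norm_le {E : Type*} [NormedAddCommGroup E]
    [InnerProductSpace ℝ E] {u v : E} {s : ℝ} (hs : 0 ≤ s) (h : s * ‖v‖ ≤ ‖u‖) :
    s * ⟪u, v⟫ ≤ ‖u‖ ^ 2 :=
  calc s * ⟪u, v⟫ ≤ s * (‖u‖ * ‖v‖) := by gcongr; exact real_inner_le_norm u v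
    _ = ‖u‖ * (s * ‖v‖) := by ring
    _ ≤ ‖u‖ ^ 2 := by rw [sq]; gcongr

section euclNorm

variable {m n : Type*} [Fintype m] [Fintype n]

theorem euclNorm_eq_norm_toLp (v : n → ℝ) :
    euclNorm v = ‖(WithLp.toLp 2 v : EuclideanSpace ℝ n)‖ := by
  simp [euclNorm, EuclideanSpace.norm_eq]

theorem euclNorm_nonneg (v : n → ℝ) : 0 ≤ euclNorm v := Real.sqrt_nonneg _

theorem euclNorm_sq (v : n → ℝ) : euclNorm v ^ 2 = v ⬝ᵥ v := by
  rw [euclNorm, Real.sq_sqrt (by positivity)]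
  simp [dotProduct, sq]

theorem euclNorm_eq_zero {v : n → ℝ} : euclNorm v = 0 ↔ v = 0 := by
  rw [euclNorm_eq_norm_toLp, norm_eq_zero, WithLp.toLp_eq_zero]

theorem euclNorm_mulVec_sq (F : Matrix m n ℝ) (x : n → ℝ) :
    euclNorm (F *ᵥ x) ^ 2 = x ⬝ᵥ ((Fᵀ * F) *ᵥ x) := by
  rw [euclNorm_sq, ← mulVec_mulVec, dotProduct_mulVec x Fᵀ, vecMul_transpose]

theorem Matrix.PosSemidef.mul_euclNorm_sq_le_dotProduct_mulVec {s : ℝ}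
    {A : Matrix n n ℝ} (hA : A.PosSemidef) (h : ∀ x, s * euclNorm x ≤ euclNorm (A *ᵥ x))
    (x : n → ℝ) : s * euclNorm x ^ 2 ≤ x ⬝ᵥ (A *ᵥ x) := by
  classical
  have hT : (toEuclideanLin A).IsPositive := isPositive_toEuclideanLin_iff.mpr hA
  simpa [euclNorm_eq_norm_toLp, EuclideanSpace.inner_toLp_toLp] using
    hT.mul_norm_sq_le_inner_of_mul_norm_le
      (fun y => by simpa [euclNorm_eq_norm_toLp, toLpLin_apply] using h y.ofLp) (WithLp.toLp 2 x)

theorem mul_dotProduct_mulVec_le_euclNorm_sq {s : ℝ} (hs : 0 ≤ s) {A : Matrix n n ℝ}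
    {x : n → ℝ} (h : s * euclNorm x ≤ euclNorm (A *ᵥ x)) :
    s * (x ⬝ᵥ (A *ᵥ x)) ≤ euclNorm (A *ᵥ x) ^ 2 := by
  simp only [euclNorm_eq_norm_toLp] at h ⊢
  simpa [EuclideanSpace.inner_toLp_toLp] using mul_inner_le_norm_sq_of_mul_norm_le hs h

end euclNorm

section singularValue

variable {m n : Type*} [Fintype m] [Fintype n]

-- The zero subspace admits every `r`, so the defining set is unbounded and `sSup` is junk `0`.
theorem singularValue_zero (A : Matrix m n ℝ) : singularValue 0 A = 0 := by
  refine Real.sSup_of_not_bddAbove fun ⟨c, hc⟩ => ?_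
  have hmem : max c 0 + 1 ∈ {r : ℝ | 0 ≤ r ∧ ∃ V : Submodule ℝ (n → ℝ),
      Module.finrank ℝ V = 0 ∧ ∀ x ∈ V, r * euclNorm x ≤ euclNorm (A *ᵥ x)} := by
    refine ⟨by positivity, ⊥, finrank_bot ℝ _, fun x hx => ?_⟩
    rw [(Submodule.mem_bot ℝ).mp hx, euclNorm_eq_zero.mpr rfl, mul_zero]
    exact euclNorm_nonneg _
  linarith [hc hmem, le_max_left c 0]

theorem le_singularValue {p : ℕ} (hp : 0 < p) {A : Matrix m n ℝ} {r : ℝ} (hr : 0 ≤ r)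
    {V : Submodule ℝ (n → ℝ)} (hV : Module.finrank ℝ V = p)
    (h : ∀ x ∈ V, r * euclNorm x ≤ euclNorm (A *ᵥ x)) : r ≤ singularValue p A := by
  classical
  refine le_csSup ⟨‖(toEuclideanLin A).toContinuousLinearMap‖, ?_⟩ ⟨hr, V, hV, h⟩
  rintro t ⟨-, W, hW, htW⟩
  have hW0 : W ≠ ⊥ := by
    rintro rfl
    rw [finrank_bot] at hW
    omega
  obtain ⟨x, hxW, hx0⟩ := Submodule.exists_mem_ne_zero_of_ne_bot hW0
  have hAx : euclNorm (A *ᵥ x) ≤ ‖(toEuclideanLin A).toContinuousLinearMap‖ * euclNorm x := by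
    simpa [euclNorm_eq_norm_toLp, toLpLin_apply] using
      (toEuclideanLin A).toContinuousLinearMap.le_opNorm (WithLp.toLp 2 x)
  have hx : 0 < euclNorm x := (euclNorm_nonneg x).lt_of_ne' (euclNorm_eq_zero.not.mpr hx0)
  exact le_of_mul_le_mul_right ((htW x hxW).trans hAx) hx

theorem le_singularValue_sq {p : ℕ} (hp : 0 < p) {A : Matrix m n ℝ} {c : ℝ} (hc : 0 ≤ c)
    {V : Submodule ℝ (n → ℝ)} (hV : Module.finrank ℝ V = p)
    (h : ∀ x ∈ V, c * euclNorm x ^ 2 ≤ euclNorm (A *ᵥ x) ^ 2) : c ≤ singularValue p A ^ 2 := by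
  refine (Real.sqrt_le_iff.mp (le_singularValue hp (Real.sqrt_nonneg c) hV fun x hx => ?_)).2
  rw [← pow_le_pow_iff_left₀ (mul_nonneg (Real.sqrt_nonneg c) (euclNorm_nonneg x))
    (euclNorm_nonneg _) two_ne_zero, mul_pow, Real.sq_sqrt hc]
  exact h x hx

end singularValue

open scoped Pointwise in
theorem Real.sSup_mul_sSup_le {S T : Set ℝ} {c : ℝ} (hc : 0 ≤ c) (hS : ∀ x ∈ S, 0 ≤ x)
    (hT : ∀ y ∈ T, 0 ≤ y) (h : ∀ x ∈ S, ∀ y ∈ T, x * y ≤ c) : sSup S * sSup T ≤ c := by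
  rw [← smul_eq_mul, ← Real.sSup_smul_of_nonneg (Real.sSup_nonneg hS)]
  refine Real.sSup_le ?_ hc
  rintro _ ⟨y, hy, rfl⟩
  change sSup S * y ≤ c
  rw [mul_comm, ← smul_eq_mul, ← Real.sSup_smul_of_nonneg (hT y hy)]
  refine Real.sSup_le ?_ hc
  rintro _ ⟨x, hx, rfl⟩
  exact (mul_comm y x).trans_le (h x hx y hy)

section transposeMul

variable {m n : Type*} [Fintype m] [Fintype n]

theorem Matrix.posSemidef_transpose_mul_self (F : Matrix m n ℝ) : (Fᵀ * F).PosSemidef := by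
  simpa [conjTranspose_eq_transpose_of_trivial] using posSemidef_conjTranspose_mul_self F

theorem mul_le_singularValue_mul_transpose_sq [Nonempty n] (F G : Matrix m n ℝ) {r s : ℝ}
    (hr : 0 ≤ r) (hs : 0 < s) (hF : ∀ x, r * euclNorm x ≤ euclNorm ((Fᵀ * F) *ᵥ x))
    (hG : ∀ x, s * euclNorm x ≤ euclNorm ((Gᵀ * G) *ᵥ x)) :
    r * s ≤ singularValue (Fintype.card n) (F * Gᵀ) ^ 2 := by
  classical
  have hinj : Function.Injective G.mulVecLin := by
    refine (injective_iff_map_eq_zero _).mpr fun x hx => euclNorm_eq_zero.mp ?_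
    have hsx := hG x
    rw [← mulVec_mulVec, show G *ᵥ x = 0 from hx, mulVec_zero, euclNorm_eq_zero.mpr rfl] at hsx
    nlinarith [euclNorm_nonneg x]
  refine le_singularValue_sq Fintype.card_pos (mul_nonneg hr hs.le)
    ((LinearMap.finrank_range_of_inj hinj).trans (Module.finrank_fintype_fun_eq_card ℝ)) ?_
  rintro _ ⟨x, rfl⟩
  rw [mulVecLin_apply]
  calc r * s * euclNorm (G *ᵥ x) ^ 2 = r * (s * (x ⬝ᵥ ((Gᵀ * G) *ᵥ x))) := by
        rw [euclNorm_mulVec_sq]; ring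
    _ ≤ r * euclNorm ((Gᵀ * G) *ᵥ x) ^ 2 := by
        gcongr; exact mul_dotProduct_mulVec_le_euclNorm_sq hs.le (hG x)
    _ ≤ ((Gᵀ * G) *ᵥ x) ⬝ᵥ ((Fᵀ * F) *ᵥ ((Gᵀ * G) *ᵥ x)) :=
        (posSemidef_transpose_mul_self F).mul_euclNorm_sq_le_dotProduct_mulVec hF _
    _ = euclNorm ((F * Gᵀ) *ᵥ (G *ᵥ x)) ^ 2 := by
        rw [show (F * Gᵀ) *ᵥ (G *ᵥ x) = F *ᵥ ((Gᵀ * G) *ᵥ x) by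
          simp only [mulVec_mulVec, Matrix.mul_assoc], euclNorm_mulVec_sq]

theorem singularValue_transpose_mul_self_mul_le_sq (F G : Matrix m n ℝ) :
    singularValue (Fintype.card n) (Fᵀ * F) * singularValue (Fintype.card n) (Gᵀ * G) ≤
      singularValue (Fintype.card n) (F * Gᵀ) ^ 2 := by
  cases isEmpty_or_nonempty n
  · simp [Fintype.card_eq_zero, singularValue_zero]
  refine Real.sSup_mul_sSup_le (sq_nonneg _) (fun _ hr => hr.1) (fun _ hs => hs.1) ?_
  rintro r ⟨hr, V, hV, hrV⟩ s ⟨hs, W, hW, hsW⟩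
  rcases hs.eq_or_lt with rfl | hs
  · simpa using sq_nonneg _
  have hcard := (Module.finrank_fintype_fun_eq_card ℝ (η := n)).symm
  rw [Submodule.eq_top_of_finrank_eq (hV.trans hcard)] at hrV
  rw [Submodule.eq_top_of_finrank_eq (hW.trans hcard)] at hsW
  exact mul_le_singularValue_mul_transpose_sq F G hr hs (fun x => hrV x Submodule.mem_top)
    (fun x => hsW x Submodule.mem_top)

end transposeMul

section weightedRowMatrix

variable {m n : Type*}

noncomputable def weightedRowMatrix (w : m → ℝ) (f : m → n → ℝ) : Matrix m n ℝ :=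
  of fun a i => √(w a) * f a i

theorem sum_smul_vecMulVec_eq_transpose_mul [Fintype m] [Fintype n] {w : m → ℝ}
    (hw : ∀ a, 0 ≤ w a) (f : m → n → ℝ) :
    ∑ a, w a • vecMulVec (f a) (f a) = (weightedRowMatrix w f)ᵀ * weightedRowMatrix w f := by
  ext i j
  simp only [Matrix.sum_apply, Matrix.smul_apply, vecMulVec_apply, smul_eq_mul, mul_apply,
    transpose_apply, weightedRowMatrix, of_apply]
  refine Finset.sum_congr rfl fun a _ => ?_
  linear_combination (f a i * f a j) * (Real.mul_self_sqrt (hw a)).symm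

theorem weightedRowMatrix_mul_transpose [Fintype n] {w : m → ℝ} (hw : ∀ a, 0 ≤ w a) (v : m → ℝ)
    (f g : m → n → ℝ) :
    weightedRowMatrix w f * (weightedRowMatrix v g)ᵀ =
      of fun a b => √(w a * v b) * (f a ⬝ᵥ g b) := by
  ext a b
  simp only [mul_apply, transpose_apply, weightedRowMatrix, of_apply, Real.sqrt_mul (hw a),
    dotProduct, Finset.mul_sum]
  exact Finset.sum_congr rfl fun i _ => by ring

end weightedRowMatrix

theorem singularValue_sq_ge_of_weighted_gram_general
    {d p : ℕ} (pw qw : Fin d → ℝ)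
    (hpw : ∀ a, 0 ≤ pw a) (hqw : ∀ b, 0 ≤ qw b)
    (f g : Fin d → Fin p → ℝ)
    (M : Matrix (Fin d) (Fin d) ℝ)
    (hM : ∀ a b, M a b = Real.sqrt (pw a * qw b) * (f a ⬝ᵥ g b)) :
    singularValue p (∑ a, pw a • vecMulVec (f a) (f a)) *
        singularValue p (∑ b, qw b • vecMulVec (g b) (g b)) ≤
      (singularValue p M) ^ 2 := by
  have hM' : M = weightedRowMatrix pw f * (weightedRowMatrix qw g)ᵀ := by
    rw [weightedRowMatrix_mul_transpose hpw]
    exact Matrix.ext hM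
  rw [sum_smul_vecMulVec_eq_transpose_mul hpw, sum_smul_vecMulVec_eq_transpose_mul hqw, hM']
  simpa using singularValue_transpose_mul_self_mul_le_sq (weightedRowMatrix pw f)
    (weightedRowMatrix qw g)

/-- For finite sets `W = {w₁,…,w_d}`, `V = {v₁,…,v_d}` with probability
weights `(p_a)`, `(q_b)`, and embeddings `f, g` into `ℝ^p`, the matrix
`M_{ab} = √(p_a q_b) ⟨f(w_a), g(v_b)⟩` satisfies
`σ_p(M)² ≥ σ_p(Σ_a p_a f(w_a)f(w_a)ᵀ) · σ_p(Σ_b q_b g(v_b)g(v_b)ᵀ)`. -/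
theorem singularValue_sq_ge_of_weighted_gram
    {d p : ℕ} (pw qw : Fin d → ℝ)
    (hpw : ∀ a, 0 ≤ pw a) (hqw : ∀ b, 0 ≤ qw b)
    (hpsum : ∑ a, pw a = 1) (hqsum : ∑ b, qw b = 1)
    (f g : Fin d → Fin p → ℝ)
    (M : Matrix (Fin d) (Fin d) ℝ)
    (hM : ∀ a b, M a b = Real.sqrt (pw a * qw b) * (f a ⬝ᵥ g b)) :
    singularValue p (∑ a, pw a • vecMulVec (f a) (f a)) *
        singularValue p (∑ b, qw b • vecMulVec (g b) (g b)) ≤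
      (singularValue p M) ^ 2 :=
  singularValue_sq_ge_of_weighted_gram_general pw qw hpw hqw f g M hM
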